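/- arXiv:1204.1905 — 3 statements merged into one kernel-verified Lean document; each statement's English description precedes it below -/
import Mathlib

section
/- Let x_1, ..., x_n be real numbers and let u < v be two real thresholds. Define Ñ(u) = #{i ≤ n−1 : x_i ≤ u < x_{i+1}} and N(u) = #{i ≤ n : x_i > u}, similarly for v. Then |Ñ(u) − Ñ(v)| ≤ N(u) − N(v). -/
theorem stmt_9 (n : ℕ) (x : ℕ → ℝ) (u v : ℝ) (huv : u < v) :
    |((((Finset.Icc 1 (n - 1)).filter (fun i => x i ≤ u ∧ u < x (i + 1))).card : ℤ) -
        (((Finset.Icc 1 (n - 1)).filter (fun i => x i ≤ v ∧ v < x (i + 1))).card : ℤ))| ≤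
      (((Finset.Icc 1 n).filter (fun i => u < x i)).card : ℤ) -
        (((Finset.Icc 1 n).filter (fun i => v < x i)).card : ℤ) := by
  set A := (Finset.Icc 1 (n - 1)).filter (fun i => x i ≤ u ∧ u < x (i + 1)) with hA
  set B := (Finset.Icc 1 (n - 1)).filter (fun i => x i ≤ v ∧ v < x (i + 1)) with hB
  set C := (Finset.Icc 1 n).filter (fun i => u < x i) with hC
  set D := (Finset.Icc 1 n).filter (fun i => v < x i) with hD
  have hDC : D ⊆ C := by
    intro i hi
    simp only [hC, hD, Finset.mem_filter] at *
    exact ⟨hi.1, huv.trans hi.2⟩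
  -- A \ B injects into C \ D via i ↦ i + 1
  have h1 : (A \ B).card ≤ (C \ D).card := by
    apply Finset.card_le_card_of_injOn (fun i => i + 1)
    · intro i hi
      simp only [Finset.mem_coe, Finset.mem_sdiff, hA, hB, Finset.mem_filter, Finset.mem_Icc] at hi
      obtain ⟨⟨⟨h1i, h2i⟩, hxu, hux⟩, hnB⟩ := hi
      have hn : 2 ≤ n := by omega
      have hvx : x (i + 1) ≤ v := by
        by_contra hc
        exact hnB ⟨⟨h1i, h2i⟩, hxu.trans huv.le, lt_of_not_ge hc⟩
      simp only [Finset.mem_coe, Finset.mem_sdiff, hC, hD, Finset.mem_filter, Finset.mem_Icc]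
      refine ⟨⟨⟨by omega, by omega⟩, hux⟩, ?_⟩
      rintro ⟨-, hv⟩
      exact absurd hvx (not_le.mpr hv)
    · exact fun a _ b _ h => by simpa using h
  -- B \ A ⊆ C \ D
  have h2 : (B \ A).card ≤ (C \ D).card := by
    apply Finset.card_le_card
    intro i hi
    simp only [Finset.mem_sdiff, hA, hB, Finset.mem_filter, Finset.mem_Icc] at hi
    obtain ⟨⟨⟨h1i, h2i⟩, hxv, hvx⟩, hnA⟩ := hi
    have hux : u < x i := by
      by_contra hc
      exact hnA ⟨⟨h1i, h2i⟩, le_of_not_gt hc, huv.trans hvx⟩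
    simp only [Finset.mem_sdiff, hC, hD, Finset.mem_filter, Finset.mem_Icc]
    exact ⟨⟨⟨h1i, by omega⟩, hux⟩, fun h => absurd hxv (not_le.mpr h.2)⟩
  have hCDcard : (C \ D).card = C.card - D.card := Finset.card_sdiff_of_subset hDC
  have hDleC : D.card ≤ C.card := Finset.card_le_card hDC
  have hAB : A.card ≤ (A \ B).card + B.card := Finset.card_le_card_sdiff_add_card
  have hBA : B.card ≤ (B \ A).card + A.card := Finset.card_le_card_sdiff_add_card
  rw [abs_le]
  constructor <;> push_cast <;> omega
end

section
/- With the ARMAX process X_n = max{Y_n, Y_{n−2}, Y_{n−3}} ((Y_k) i.i.d. Uniform(0,1)) and u_n = 1 − τ/n, τ > 0, the limiting ratio of upcrossing to exceedance probabilities satisfies P(X_1 ≤ u_n < X_2)/P(X_1 > u_n) → 2/3 as n → ∞. -/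
open Filter Topology MeasureTheory ProbabilityTheory

/-- ARMAX process of Section 6.1: the ratio of upcrossing to exceedance
probabilities of the levels `u_n = 1 − τ/n` tends to `2/3`. -/
theorem stmt_12 {Ω : Type*} [MeasurableSpace Ω] (P : Measure Ω) [IsProbabilityMeasure P]
    (Y : ℕ → Ω → ℝ) (hYmeas : ∀ k, Measurable (Y k))
    (hindep : iIndepFun Y P)
    (hunif : ∀ k, P.map (Y k) = volume.restrict (Set.Icc (0 : ℝ) 1))
    (τ : ℝ) (hτ : 0 < τ) :
    Tendsto (fun (n : ℕ) =>
        (P {ω | max (Y 4 ω) (max (Y 2 ω) (Y 1 ω)) ≤ 1 - τ / n ∧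
            1 - τ / n < max (Y 5 ω) (max (Y 3 ω) (Y 2 ω))}).toReal /
          (P {ω | 1 - τ / n < max (Y 4 ω) (max (Y 2 ω) (Y 1 ω))}).toReal)
      atTop (𝓝 (2 / 3)) := by
  -- single-coordinate probability
  have hsingle : ∀ (k : ℕ) (u : ℝ), 0 ≤ u → u ≤ 1 →
      P {ω | Y k ω ≤ u} = ENNReal.ofReal u := by
    intro k u hu0 hu1
    have : P {ω | Y k ω ≤ u} = (P.map (Y k)) (Set.Iic u) := by
      rw [Measure.map_apply (hYmeas k) measurableSet_Iic]; rfl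
    rw [this, hunif k, Measure.restrict_apply measurableSet_Iic]
    have : Set.Iic u ∩ Set.Icc (0:ℝ) 1 = Set.Icc 0 u := by
      ext x; simp only [Set.mem_inter_iff, Set.mem_Iic, Set.mem_Icc]
      constructor
      · rintro ⟨h1, h2, h3⟩; exact ⟨h2, h1⟩
      · rintro ⟨h1, h2⟩; exact ⟨h2, h1, h2.trans hu1⟩
    rw [this, Real.volume_Icc, sub_zero]
  -- product over a finite set of indices
  have hprod : ∀ (u : ℝ) (S : Finset ℕ),
      P (⋂ k ∈ S, {ω | Y k ω ≤ u}) = ∏ k ∈ S, P {ω | Y k ω ≤ u} := by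
    intro u S
    refine hindep.meas_biInter (fun i _ => ?_)
    exact ⟨Set.Iic u, measurableSet_Iic, rfl⟩
  -- exact ratio formula for u ∈ [0,1)
  have key : ∀ u : ℝ, 0 ≤ u → u < 1 →
      (P {ω | max (Y 4 ω) (max (Y 2 ω) (Y 1 ω)) ≤ u ∧
            u < max (Y 5 ω) (max (Y 3 ω) (Y 2 ω))}).toReal /
          (P {ω | u < max (Y 4 ω) (max (Y 2 ω) (Y 1 ω))}).toReal
        = u ^ 3 * (1 + u) / (1 + u + u ^ 2) := by
    intro u hu0 hu1
    set A : ℕ → Set Ω := fun k => {ω | Y k ω ≤ u} with hA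
    have hP3 : P (⋂ k ∈ ({1, 2, 4} : Finset ℕ), A k) = ENNReal.ofReal (u ^ 3) := by
      rw [hprod u]
      rw [show ({1, 2, 4} : Finset ℕ) = {1, 2, 4} from rfl]
      rw [Finset.prod_insert (by decide), Finset.prod_insert (by decide),
        Finset.prod_singleton]
      simp only [hsingle _ u hu0 hu1.le]
      rw [← ENNReal.ofReal_mul hu0, ← ENNReal.ofReal_mul (by positivity)]
      ring_nf
    have hP5 : P (⋂ k ∈ ({1, 2, 3, 4, 5} : Finset ℕ), A k) = ENNReal.ofReal (u ^ 5) := by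
      rw [hprod u]
      rw [Finset.prod_insert (by decide), Finset.prod_insert (by decide),
        Finset.prod_insert (by decide), Finset.prod_insert (by decide),
        Finset.prod_singleton]
      simp only [hsingle _ u hu0 hu1.le]
      rw [← ENNReal.ofReal_mul hu0, ← ENNReal.ofReal_mul (by positivity),
        ← ENNReal.ofReal_mul (by positivity), ← ENNReal.ofReal_mul (by positivity)]
      ring_nf
    have hmeasA : ∀ k, MeasurableSet (A k) := fun k => (hYmeas k) measurableSet_Iic
    -- denominator set
    have hDen : {ω | u < max (Y 4 ω) (max (Y 2 ω) (Y 1 ω))}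
        = (⋂ k ∈ ({1, 2, 4} : Finset ℕ), A k)ᶜ := by
      ext ω
      simp only [Set.mem_setOf_eq, Set.mem_compl_iff, Set.mem_iInter, hA,
        Finset.mem_insert, Finset.mem_singleton, lt_max_iff, not_forall]
      constructor
      · rintro (h | h | h)
        · exact ⟨4, by norm_num, not_le.2 h⟩
        · exact ⟨2, by norm_num, not_le.2 h⟩
        · exact ⟨1, by norm_num, not_le.2 h⟩
      · rintro ⟨k, hk, hk2⟩
        rcases hk with rfl | rfl | rfl
        · right; right; exact not_le.1 hk2
        · right; left; exact not_le.1 hk2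
        · left; exact not_le.1 hk2
    -- numerator set
    have hNum : {ω | max (Y 4 ω) (max (Y 2 ω) (Y 1 ω)) ≤ u ∧
          u < max (Y 5 ω) (max (Y 3 ω) (Y 2 ω))}
        = (⋂ k ∈ ({1, 2, 4} : Finset ℕ), A k) \ (⋂ k ∈ ({1, 2, 3, 4, 5} : Finset ℕ), A k) := by
      ext ω
      simp only [Set.mem_setOf_eq, Set.mem_diff, Set.mem_iInter, hA,
        Finset.mem_insert, Finset.mem_singleton, max_le_iff, lt_max_iff, not_forall]
      constructor
      · rintro ⟨⟨h4, h2, h1⟩, h5 | h3 | h2'⟩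
        · refine ⟨?_, 5, by norm_num, not_le.2 h5⟩
          rintro k (rfl | rfl | rfl) <;> assumption
        · refine ⟨?_, 3, by norm_num, not_le.2 h3⟩
          rintro k (rfl | rfl | rfl) <;> assumption
        · exact absurd h2 (not_le.2 h2')
      · rintro ⟨hall, k, hk, hk2⟩
        have h1 := hall 1 (by norm_num)
        have h2 := hall 2 (by norm_num)
        have h4 := hall 4 (by norm_num)
        refine ⟨⟨h4, h2, h1⟩, ?_⟩
        rcases hk with rfl | rfl | rfl | rfl | rfl
        · exact absurd h1 hk2
        · exact absurd h2 hk2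
        · right; left; exact not_le.1 hk2
        · exact absurd h4 hk2
        · left; exact not_le.1 hk2
    have hsub : (⋂ k ∈ ({1, 2, 3, 4, 5} : Finset ℕ), A k)
        ⊆ (⋂ k ∈ ({1, 2, 4} : Finset ℕ), A k) := by
      intro ω hω
      simp only [Set.mem_iInter] at hω ⊢
      intro k hk
      refine hω k ?_
      fin_cases hk <;> norm_num
    have hmeas5 : MeasurableSet (⋂ k ∈ ({1, 2, 3, 4, 5} : Finset ℕ), A k) :=
      MeasurableSet.biInter (Set.to_countable _) (fun k _ => hmeasA k)
    have hPnum : P {ω | max (Y 4 ω) (max (Y 2 ω) (Y 1 ω)) ≤ u ∧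
          u < max (Y 5 ω) (max (Y 3 ω) (Y 2 ω))} = ENNReal.ofReal (u ^ 3 - u ^ 5) := by
      rw [hNum, measure_diff hsub hmeas5.nullMeasurableSet (measure_ne_top P _), hP3, hP5,
        ← ENNReal.ofReal_sub _ (by positivity)]
    have hm3 : MeasurableSet (⋂ k ∈ ({1, 2, 4} : Finset ℕ), A k) :=
      MeasurableSet.biInter (Set.to_countable _) (fun k _ => hmeasA k)
    have hu3 : u ^ 3 ≤ 1 := pow_le_one₀ hu0 hu1.le
    have hu53 : u ^ 5 ≤ u ^ 3 := pow_le_pow_of_le_one hu0 hu1.le (by norm_num)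
    have hPden : P {ω | u < max (Y 4 ω) (max (Y 2 ω) (Y 1 ω))}
        = ENNReal.ofReal (1 - u ^ 3) := by
      rw [hDen]
      rw [measure_compl hm3 (measure_ne_top P _), hP3, measure_univ,
        ← ENNReal.ofReal_one, ← ENNReal.ofReal_sub _ (by positivity)]
    rw [hPnum, hPden, ENNReal.toReal_ofReal (by linarith),
      ENNReal.toReal_ofReal (by linarith)]
    have h1u : (1 : ℝ) - u ≠ 0 := by linarith
    have h2u : (1 : ℝ) + u + u ^ 2 ≠ 0 := by positivity
    have h3u : (1 : ℝ) - u ^ 3 ≠ 0 := by nlinarith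
    field_simp
    ring
  -- eventually the sequence equals g (1 - τ/n)
  have htend : Tendsto (fun n : ℕ => 1 - τ / n) atTop (𝓝 1) := by
    have : Tendsto (fun n : ℕ => τ / n) atTop (𝓝 0) :=
      tendsto_const_nhds.div_atTop tendsto_natCast_atTop_atTop
    simpa using tendsto_const_nhds.sub this
  have hev : ∀ᶠ n : ℕ in atTop, 0 ≤ 1 - τ / n ∧ 1 - τ / n < 1 := by
    have h1 : ∀ᶠ n : ℕ in atTop, 0 ≤ 1 - τ / n := by
      filter_upwards [htend.eventually (eventually_ge_nhds (by norm_num : (0:ℝ) < 1))]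
        with n hn using by linarith
    have h2 : ∀ᶠ n : ℕ in atTop, 1 - τ / n < 1 := by
      filter_upwards [eventually_ge_atTop 1] with n hn
      have : 0 < τ / n := div_pos hτ (by exact_mod_cast hn)
      linarith
    exact h1.and h2
  have heq : (fun (n : ℕ) =>
        (P {ω | max (Y 4 ω) (max (Y 2 ω) (Y 1 ω)) ≤ 1 - τ / n ∧
            1 - τ / n < max (Y 5 ω) (max (Y 3 ω) (Y 2 ω))}).toReal /
          (P {ω | 1 - τ / n < max (Y 4 ω) (max (Y 2 ω) (Y 1 ω))}).toReal)
      =ᶠ[atTop] fun n : ℕ =>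
        (1 - τ / n) ^ 3 * (1 + (1 - τ / n)) / (1 + (1 - τ / n) + (1 - τ / n) ^ 2) := by
    filter_upwards [hev] with n hn
    exact key _ hn.1 hn.2
  rw [Filter.tendsto_congr' heq]
  have : Tendsto (fun u : ℝ => u ^ 3 * (1 + u) / (1 + u + u ^ 2)) (𝓝 1) (𝓝 (2 / 3)) := by
    have hc : ContinuousAt (fun u : ℝ => u ^ 3 * (1 + u) / (1 + u + u ^ 2)) 1 := by
      apply ContinuousAt.div (by fun_prop) (by fun_prop)
      norm_num
    convert hc.tendsto using 2
    norm_num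
  exact this.comp htend
end

section
/- Let η ∈ (0,1], ν > 0, σ² > 1/η². If (U_n, V_n) converges in distribution to the bivariate normal N(0, [[ην, ν],[ν, ηνσ²]]) (U_n the centered scaled cluster count, V_n the centered scaled upcrossing count), V_n/c_n^{1/2} contributes W_n → ν in probability, and η_n → η, then √c_n(η̂_n − η_n) converges in distribution to N(0, (η/ν)(η²σ² − 1)), where η̂_n = N̂_n/N̄_n. -/
open Filter Topology MeasureTheory ProbabilityTheory

open ENNReal NNReal

-- tightness lemma
lemma tight_of_tendsto {Ω : Type*} [MeasurableSpace Ω] (P : Measure Ω) (hP : IsProbabilityMeasure P)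
    (f : ℕ → Ω → ℝ) (hf : ∀ n, AEMeasurable (f n) P) (μ : ProbabilityMeasure ℝ)
    (h : Tendsto (fun n => MeasureTheory.ProbabilityMeasure.map (⟨P, hP⟩ : ProbabilityMeasure Ω) (hf n))
      atTop (𝓝 μ)) (θ : ℝ≥0∞) (hθ : 0 < θ) :
    ∃ M : ℝ, 0 < M ∧ ∀ᶠ n in atTop, P {ω | M ≤ |f n ω|} < θ := by
  set F : ℕ → Set ℝ := fun k => {x | (k : ℝ) ≤ |x|} with hF
  have Fclosed : ∀ k, IsClosed (F k) := fun k => isClosed_le continuous_const continuous_abs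
  have Fanti : Antitone F := by
    intro k l hkl x hx
    exact le_trans (show (k:ℝ) ≤ (l:ℝ) by exact_mod_cast hkl) hx
  have hiInter : ⋂ k, F k = ∅ := by
    ext x
    simp only [Set.mem_iInter, Set.mem_empty_iff_false, iff_false]
    intro hx
    obtain ⟨k, hk⟩ := exists_nat_gt |x|
    exact absurd (hx k) (not_le.mpr hk)
  have htend : Tendsto (fun k => (μ : Measure ℝ) (F k)) atTop (𝓝 0) := by
    have := tendsto_measure_iInter_atTop (μ := (μ : Measure ℝ))
      (fun k => ((Fclosed k).measurableSet).nullMeasurableSet) Fanti ⟨0, measure_ne_top _ _⟩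
    rw [hiInter] at this
    simpa [Function.comp_def] using this
  have : ∀ᶠ k in atTop, (μ : Measure ℝ) (F k) < θ :=
    htend.eventually_lt_const hθ
  obtain ⟨k, hk⟩ := this.exists
  refine ⟨k + 1, by positivity, ?_⟩
  have hlimsup : atTop.limsup (fun n => ((ProbabilityMeasure.map (⟨P, hP⟩ : ProbabilityMeasure Ω) (hf n) : ProbabilityMeasure ℝ) : Measure ℝ) (F k)) ≤ (μ : Measure ℝ) (F k) :=
    ProbabilityMeasure.limsup_measure_closed_le_of_tendsto h (Fclosed k)
  have hev : ∀ᶠ n in atTop, ((ProbabilityMeasure.map (⟨P, hP⟩ : ProbabilityMeasure Ω) (hf n) : ProbabilityMeasure ℝ) : Measure ℝ) (F k) < θ :=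
    eventually_lt_of_limsup_lt (lt_of_le_of_lt hlimsup hk)
  filter_upwards [hev] with n hn
  have hmap : ((ProbabilityMeasure.map (⟨P, hP⟩ : ProbabilityMeasure Ω) (hf n) : ProbabilityMeasure ℝ) : Measure ℝ) (F k) = P ((f n) ⁻¹' (F k)) := by
    show (Measure.map (f n) P) (F k) = _
    exact Measure.map_apply_of_aemeasurable (hf n) (Fclosed k).measurableSet
  refine lt_of_le_of_lt ?_ (hmap ▸ hn)
  apply measure_mono
  intro ω hω
  simp only [Set.mem_preimage, hF, Set.mem_setOf_eq]
  calc (k:ℝ) ≤ k + 1 := by linarith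
  _ ≤ |f n ω| := hω

lemma slutsky_approx {Ω : Type*} [MeasurableSpace Ω] (P : Measure Ω) (hP : IsProbabilityMeasure P)
    (X T : ℕ → Ω → ℝ) (hX : ∀ n, AEMeasurable (X n) P) (hT : ∀ n, AEMeasurable (T n) P)
    (μ : ProbabilityMeasure ℝ)
    (h1 : Tendsto (fun n => MeasureTheory.ProbabilityMeasure.map (⟨P, hP⟩ : ProbabilityMeasure Ω) (hX n)) atTop (𝓝 μ))
    (h2 : ∀ δ : ℝ, 0 < δ → Tendsto (fun n => P {ω | δ < |T n ω - X n ω|}) atTop (𝓝 0)) :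
    Tendsto (fun n => MeasureTheory.ProbabilityMeasure.map (⟨P, hP⟩ : ProbabilityMeasure Ω) (hT n)) atTop (𝓝 μ) := by
  apply MeasureTheory.tendsto_of_forall_isOpen_le_liminf
  intro G hG
  -- pass to ℝ≥0∞
  suffices h : (μ : Measure ℝ) G ≤ atTop.liminf
      (fun n => ((ProbabilityMeasure.map (⟨P, hP⟩ : ProbabilityMeasure Ω) (hT n) : ProbabilityMeasure ℝ) : Measure ℝ) G) by
    set ms := fun n => (ProbabilityMeasure.map (⟨P, hP⟩ : ProbabilityMeasure Ω) (hT n) : ProbabilityMeasure ℝ)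
    have aux : (ENNReal.ofNNReal (atTop.liminf fun n => ms n G)) =
        atTop.liminf (fun n => ((ms n : Measure ℝ) G)) := by
      have := Monotone.map_liminf_of_continuousAt (F := atTop) ENNReal.coe_mono (fun n => ms n G)
        ENNReal.continuous_coe.continuousAt
        (IsBoundedUnder.isCoboundedUnder_ge ⟨1, by simp⟩) ⟨0, by simp⟩
      rw [this]
      congr 1
      ext n
      simp [Function.comp, ProbabilityMeasure.ennreal_coeFn_eq_coeFn_toMeasure]
    rw [← ENNReal.coe_le_coe, aux, ProbabilityMeasure.ennreal_coeFn_eq_coeFn_toMeasure]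
    exact h
  -- main estimate
  refine ENNReal.le_of_forall_pos_le_add ?_
  intro ε hε hfin
  -- approximating open sets from inside
  set S : ℕ → Set ℝ := fun k => {x | ENNReal.ofReal (1/(k+1) : ℝ) < EMetric.infEdist x Gᶜ} with hS
  have Sopen : ∀ k, IsOpen (S k) := fun k =>
    isOpen_Ioi.preimage EMetric.continuous_infEdist |>.mono le_rfl
  have Smono : Monotone S := by
    intro k l hkl x hx
    simp only [hS, Set.mem_setOf_eq] at hx ⊢
    refine lt_of_le_of_lt ?_ hx
    apply ENNReal.ofReal_le_ofReal
    apply one_div_le_one_div_of_le (by positivity)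
    have : (k:ℝ) ≤ l := Nat.cast_le.mpr hkl
    linarith
  have SsubG : ∀ k, S k ⊆ G := by
    intro k x hx
    by_contra hxG
    have h0 : EMetric.infEdist x Gᶜ = 0 := EMetric.infEdist_zero_of_mem hxG
    simp only [hS, Set.mem_setOf_eq] at hx
    rw [h0] at hx
    exact absurd hx (by simp)
  have SUnion : ⋃ k, S k = G := by
    apply Set.Subset.antisymm (Set.iUnion_subset SsubG)
    intro x hx
    have hpos : 0 < EMetric.infEdist x Gᶜ := by
      refine (EMetric.infEdist_pos_iff_notMem_closure).mpr ?_
      rw [(hG.isClosed_compl).closure_eq]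
      simpa using hx
    obtain ⟨r, hr0, hrlt⟩ := ENNReal.lt_iff_exists_real_btwn.mp hpos
    obtain ⟨k, hk⟩ := exists_nat_gt (1/r)
    rcases hrlt with ⟨hr1, hr2⟩
    have hrpos : 0 < r := by exact_mod_cast (ENNReal.ofReal_pos.mp (lt_of_le_of_lt zero_le hr1))
    refine Set.mem_iUnion.mpr ⟨k, ?_⟩
    have h1k : (1/(k+1) : ℝ) < r := by
      have hk' : 1/r < (k:ℝ)+1 := by linarith
      rw [div_lt_iff₀ hrpos] at hk'
      rw [div_lt_iff₀ (show (0:ℝ) < (k:ℝ)+1 by positivity)]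
      nlinarith
    calc ENNReal.ofReal (1/(k+1) : ℝ) < ENNReal.ofReal r := by
          apply ENNReal.ofReal_lt_ofReal_iff_of_nonneg (by positivity) |>.mpr h1k
      _ < EMetric.infEdist x Gᶜ := hr2
  -- continuity from below
  have hcont : Tendsto (fun k => (μ : Measure ℝ) (S k)) atTop (𝓝 ((μ : Measure ℝ) G)) := by
    have := tendsto_measure_iUnion_atTop (μ := (μ : Measure ℝ)) Smono
    rwa [SUnion] at this
  -- choose k with μ G ≤ μ (S k) + ε/2
  have hhalf : (0:ℝ≥0∞) < ε/2 := by
    simp only [ENNReal.div_pos_iff]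
    exact ⟨by exact_mod_cast hε.ne', by norm_num⟩
  obtain ⟨k, hk⟩ : ∃ k, (μ : Measure ℝ) G ≤ (μ : Measure ℝ) (S k) + ε/2 := by
    by_cases hcase : (μ : Measure ℝ) G ≤ ε/2
    · exact ⟨0, le_trans hcase le_add_self⟩
    · push_neg at hcase
      have hGfin : (μ : Measure ℝ) G ≠ ∞ := measure_ne_top _ _
      have hsub : (μ : Measure ℝ) G - ε/2 < (μ : Measure ℝ) G :=
        ENNReal.sub_lt_self hGfin (fun h => absurd h (by intro h; rw [h] at hcase; simp at hcase)) hhalf.ne'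
      have hev : ∀ᶠ k in atTop, (μ : Measure ℝ) G - ε/2 < (μ : Measure ℝ) (S k) :=
        hcont.eventually (eventually_gt_nhds hsub)
      obtain ⟨k, hk⟩ := hev.exists
      refine ⟨k, ?_⟩
      rw [← tsub_add_cancel_of_le (le_of_lt hcase)]
      exact add_le_add_left hk.le _
  -- now the liminf estimate for S k
  set a : ℕ → ℝ≥0∞ := fun n => ((ProbabilityMeasure.map (⟨P, hP⟩ : ProbabilityMeasure Ω) (hT n) : ProbabilityMeasure ℝ) : Measure ℝ) G with ha
  set bad : ℕ → ℝ≥0∞ := fun n => P {ω | (1/(k+1) : ℝ) < |T n ω - X n ω|} with hbad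
  have hδ : (0:ℝ) < 1/(k+1) := by positivity
  have key : ∀ n, ((ProbabilityMeasure.map (⟨P, hP⟩ : ProbabilityMeasure Ω) (hX n) : ProbabilityMeasure ℝ) : Measure ℝ) (S k) ≤ a n + bad n := by
    intro n
    have hXmap : ((ProbabilityMeasure.map (⟨P, hP⟩ : ProbabilityMeasure Ω) (hX n) : ProbabilityMeasure ℝ) : Measure ℝ) (S k) = P ((X n) ⁻¹' (S k)) := by
      show (Measure.map (X n) P) (S k) = _
      exact Measure.map_apply_of_aemeasurable (hX n) (Sopen k).measurableSet
    have hTmap : a n = P ((T n) ⁻¹' G) := by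
      show ((ProbabilityMeasure.map (⟨P, hP⟩ : ProbabilityMeasure Ω) (hT n) : ProbabilityMeasure ℝ) : Measure ℝ) G = _
      show (Measure.map (T n) P) G = _
      exact Measure.map_apply_of_aemeasurable (hT n) hG.measurableSet
    rw [hXmap, hTmap, hbad]
    refine le_trans (measure_mono ?_) (measure_union_le _ _)
    intro ω hω
    simp only [Set.mem_preimage, hS, Set.mem_setOf_eq] at hω
    by_cases hd : (1/(k+1) : ℝ) < |T n ω - X n ω|
    · exact Or.inr hd
    · left
      push_neg at hd
      simp only [Set.mem_preimage]
      by_contra hTG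
      have h1 : EMetric.infEdist (X n ω) Gᶜ ≤ edist (X n ω) (T n ω) :=
        EMetric.infEdist_le_edist_of_mem hTG
      have h2 : edist (X n ω) (T n ω) = ENNReal.ofReal |T n ω - X n ω| := by
        rw [edist_dist, Real.dist_eq, abs_sub_comm]
      rw [h2] at h1
      have h3 : ENNReal.ofReal |T n ω - X n ω| ≤ ENNReal.ofReal (1/(k+1) : ℝ) :=
        ENNReal.ofReal_le_ofReal hd
      exact absurd hω (not_lt.mpr (le_trans h1 h3))
  have hXliminf : (μ : Measure ℝ) (S k) ≤ atTop.liminf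
      (fun n => ((ProbabilityMeasure.map (⟨P, hP⟩ : ProbabilityMeasure Ω) (hX n) : ProbabilityMeasure ℝ) : Measure ℝ) (S k)) :=
    ProbabilityMeasure.le_liminf_measure_open_of_tendsto h1 (Sopen k)
  have hbadev : ∀ᶠ n in atTop, bad n < ε/2 := by
    have hhalf : (0:ℝ≥0∞) < ε/2 := by
      simp only [ENNReal.div_pos_iff]
      exact ⟨by exact_mod_cast hε.ne', by norm_num⟩
    exact (h2 _ hδ).eventually_lt_const hhalf
  have hliminf2 : atTop.liminf
      (fun n => ((ProbabilityMeasure.map (⟨P, hP⟩ : ProbabilityMeasure Ω) (hX n) : ProbabilityMeasure ℝ) : Measure ℝ) (S k))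
      ≤ atTop.liminf a + ε/2 := by
    have h1' : atTop.liminf
        (fun n => ((ProbabilityMeasure.map (⟨P, hP⟩ : ProbabilityMeasure Ω) (hX n) : ProbabilityMeasure ℝ) : Measure ℝ) (S k))
        ≤ atTop.liminf (fun n => a n + ε/2) := by
      refine liminf_le_liminf ?_ (isBoundedUnder_of ⟨0, fun n => zero_le⟩)
        (IsBoundedUnder.isCoboundedUnder_ge (isBoundedUnder_of ⟨⊤, fun n => le_top⟩))
      filter_upwards [hbadev] with n hn
      exact le_trans (key n) (add_le_add_right hn.le _)
    refine le_trans h1' (le_of_eq ?_)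
    apply liminf_add_const atTop (R := ℝ≥0∞) a (↑ε/2)
    · exact IsBoundedUnder.isCoboundedUnder_ge (isBoundedUnder_of ⟨⊤, fun n => le_top⟩)
    · exact isBoundedUnder_of ⟨0, fun n => zero_le⟩
  calc (μ : Measure ℝ) G ≤ (μ : Measure ℝ) (S k) + ε/2 := hk
    _ ≤ (atTop.liminf a + ε/2) + ε/2 := by
        exact add_le_add_left (le_trans hXliminf hliminf2) _
    _ = atTop.liminf a + ε := by
        rw [add_assoc, ENNReal.add_halves]

lemma abs_bound {δ ν η M u v w r : ℝ} (hδ : 0 < δ) (hν : 0 < ν) (hη : 0 ≤ η) (hη1 : η ≤ 1)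
    (hM : 1 ≤ M) (hu : |u| ≤ M) (hv : |v| ≤ M)
    (hw : |w - ν| ≤ min (ν/2) (δ*ν^2/(8*M))) (hr : |r - η| ≤ δ*ν/(4*M)) :
    |(u - r*v)/w - (ν⁻¹*u + (-(η/ν))*v)| ≤ δ := by
  have hM0 : (0:ℝ) < M := by linarith
  have hw2 : ν/2 ≤ w := by
    have h := abs_le.mp (le_trans hw (min_le_left _ _))
    linarith [h.1]
  have hwpos : 0 < w := by linarith
  have hid : (u - r*v)/w - (ν⁻¹*u + (-(η/ν))*v)
      = (u - η*v)*(ν-w)/(w*ν) + (η-r)*v/w := by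
    field_simp
    ring
  have h1 : |u - η*v| ≤ 2*M := by
    calc |u - η*v| ≤ |u| + |η*v| := abs_sub _ _
      _ = |u| + η*|v| := by rw [abs_mul, abs_of_nonneg hη]
      _ ≤ M + 1*M := by nlinarith [abs_nonneg v]
      _ = 2*M := by ring
  have h2 : |ν - w| ≤ δ*ν^2/(8*M) := by
    rw [abs_sub_comm]; exact le_trans hw (min_le_right _ _)
  have h3 : |η - r| ≤ δ*ν/(4*M) := by rwa [abs_sub_comm] at hr
  have hterm1 : |(u - η*v)*(ν-w)/(w*ν)| ≤ δ/2 := by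
    rw [abs_div, abs_mul, abs_of_pos (by positivity : (0:ℝ) < w*ν)]
    calc |u - η*v| * |ν - w| / (w*ν) ≤ (2*M) * (δ*ν^2/(8*M)) / ((ν/2)*ν) := by
          apply div_le_div₀ (by positivity) (mul_le_mul h1 h2 (abs_nonneg _) (by positivity))
            (by positivity) (by nlinarith)
      _ = δ/2 := by field_simp; ring
  have hterm2 : |(η-r)*v/w| ≤ δ/2 := by
    rw [abs_div, abs_mul, abs_of_pos hwpos]
    calc |η - r| * |v| / w ≤ (δ*ν/(4*M)) * M / (ν/2) := by
          apply div_le_div₀ (by positivity) (mul_le_mul h3 hv (abs_nonneg _) (by positivity))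
            (by positivity) hw2
      _ = δ/2 := by field_simp; ring
  calc |(u - r*v)/w - (ν⁻¹*u + (-(η/ν))*v)|
      = |(u - η*v)*(ν-w)/(w*ν) + (η-r)*v/w| := by rw [hid]
    _ ≤ |(u - η*v)*(ν-w)/(w*ν)| + |(η-r)*v/w| := abs_add_le _ _
    _ ≤ δ/2 + δ/2 := add_le_add hterm1 hterm2
    _ = δ := by ring

lemma diff_small {Ω : Type*} [MeasurableSpace Ω] (P : Measure Ω) (hP : IsProbabilityMeasure P)
    (η ν : ℝ) (hη0 : 0 < η) (hη1 : η ≤ 1) (hν : 0 < ν)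
    (c : ℕ → ℝ) (hc_pos : ∀ n, 0 < c n) (hc : Tendsto c atTop atTop)
    (Nhat Nbar : ℕ → Ω → ℝ) (mh mb : ℕ → ℝ)
    (htightU : ∀ θ : ℝ≥0∞, 0 < θ → ∃ M : ℝ, 0 < M ∧
      ∀ᶠ n in atTop, P {ω | M ≤ |(Real.sqrt (c n))⁻¹ * (Nhat n ω - mh n)|} < θ)
    (htightV : ∀ θ : ℝ≥0∞, 0 < θ → ∃ M : ℝ, 0 < M ∧
      ∀ᶠ n in atTop, P {ω | M ≤ |(Real.sqrt (c n))⁻¹ * (Nbar n ω - mb n)|} < θ)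
    (hW : ∀ ε > (0 : ℝ),
      Tendsto (fun n => (P {ω | ε < |(c n)⁻¹ * Nbar n ω - ν|}).toReal) atTop (𝓝 0))
    (hηn : Tendsto (fun n => mh n / mb n) atTop (𝓝 η))
    (δ : ℝ) (hδ : 0 < δ) :
    Tendsto (fun n => P {ω | δ <
      |Real.sqrt (c n) * (Nhat n ω / Nbar n ω - mh n / mb n) -
        (ν⁻¹ * ((Real.sqrt (c n))⁻¹ * (Nhat n ω - mh n)) +
          (-(η/ν)) * ((Real.sqrt (c n))⁻¹ * (Nbar n ω - mb n)))|}) atTop (𝓝 0) := by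
  -- eventual positivity of mb
  have hsqrt : ∀ n, 0 < Real.sqrt (c n) := fun n => Real.sqrt_pos.mpr (hc_pos n)
  have hA5 : ∀ᶠ n in atTop, 0 < mb n := by
    obtain ⟨M', hM'0, hB2⟩ := htightV (ENNReal.ofReal (1/2)) (by positivity)
    have hB1 : ∀ᶠ n in atTop, P {ω | ν/4 < |(c n)⁻¹ * Nbar n ω - ν|} < ENNReal.ofReal (1/2) := by
      have h := (hW (ν/4) (by positivity)).eventually_lt_const (show (0:ℝ) < 1/2 by norm_num)
      filter_upwards [h] with n hn
      rw [← ENNReal.ofReal_toReal (measure_ne_top P _)]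
      exact (ENNReal.ofReal_lt_ofReal_iff (by norm_num)).mpr hn
    have hB3 : ∀ᶠ n in atTop, 4*M'/ν ≤ Real.sqrt (c n) := by
      filter_upwards [hc.eventually_ge_atTop ((4*M'/ν)^2)] with n hn
      exact (Real.le_sqrt' (by positivity)).mpr hn
    filter_upwards [hB1, hB2, hB3] with n h1 h2 h3
    -- find a good sample point
    have hunion : P ({ω | ν/4 < |(c n)⁻¹ * Nbar n ω - ν|} ∪
        {ω | M' ≤ |(Real.sqrt (c n))⁻¹ * (Nbar n ω - mb n)|}) < 1 := by
      refine lt_of_le_of_lt (measure_union_le _ _) ?_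
      calc P {ω | ν/4 < |(c n)⁻¹ * Nbar n ω - ν|} +
            P {ω | M' ≤ |(Real.sqrt (c n))⁻¹ * (Nbar n ω - mb n)|}
          < ENNReal.ofReal (1/2) + ENNReal.ofReal (1/2) := ENNReal.add_lt_add h1 h2
        _ = 1 := by rw [← ENNReal.ofReal_add (by norm_num) (by norm_num)]; norm_num
    have hex : ∃ ω, ¬(ν/4 < |(c n)⁻¹ * Nbar n ω - ν|) ∧
        ¬(M' ≤ |(Real.sqrt (c n))⁻¹ * (Nbar n ω - mb n)|) := by
      by_contra hcon
      push_neg at hcon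
      have huniv : (Set.univ : Set Ω) ⊆ {ω | ν/4 < |(c n)⁻¹ * Nbar n ω - ν|} ∪
          {ω | M' ≤ |(Real.sqrt (c n))⁻¹ * (Nbar n ω - mb n)|} := by
        intro ω _
        by_cases hca : ν/4 < |(c n)⁻¹ * Nbar n ω - ν|
        · exact Or.inl hca
        · exact Or.inr (hcon ω (not_lt.mp hca))
      have : (1:ℝ≥0∞) ≤ P ({ω | ν/4 < |(c n)⁻¹ * Nbar n ω - ν|} ∪
          {ω | M' ≤ |(Real.sqrt (c n))⁻¹ * (Nbar n ω - mb n)|}) := by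
        rw [← measure_univ (μ := P)]
        exact measure_mono huniv
      exact absurd (lt_of_le_of_lt this hunion) (lt_irrefl _)
    obtain ⟨ω, hω1, hω2⟩ := hex
    push_neg at hω1 hω2
    -- arithmetic: mb n / c n is close to ν
    set s := Real.sqrt (c n) with hs
    have hss : s * s = c n := Real.mul_self_sqrt (hc_pos n).le
    have hspos : 0 < s := hsqrt n
    have hq : (c n)⁻¹ * mb n = (c n)⁻¹ * Nbar n ω - (s⁻¹ * (Nbar n ω - mb n))/s := by
      rw [← hss]
      field_simp
      ring
    have hvs : |s⁻¹ * (Nbar n ω - mb n)|/s ≤ ν/4 := by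
      have h4 : M'/s ≤ ν/4 := by
        rw [div_le_iff₀ hspos]
        have h5 : (4*M'/ν) * (ν/4) = M' := by field_simp
        nlinarith [mul_le_mul_of_nonneg_right h3 (show (0:ℝ) ≤ ν/4 by positivity)]
      calc |s⁻¹ * (Nbar n ω - mb n)|/s ≤ M'/s := by gcongr
        _ ≤ ν/4 := h4
    have hclose : |(c n)⁻¹ * mb n - ν| ≤ ν/2 := by
      rw [hq]
      have habs : |(c n)⁻¹ * Nbar n ω - (s⁻¹ * (Nbar n ω - mb n))/s - ν|
          ≤ |(c n)⁻¹ * Nbar n ω - ν| + |(s⁻¹ * (Nbar n ω - mb n))/s| := by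
        have : (c n)⁻¹ * Nbar n ω - (s⁻¹ * (Nbar n ω - mb n))/s - ν
            = ((c n)⁻¹ * Nbar n ω - ν) - (s⁻¹ * (Nbar n ω - mb n))/s := by ring
        rw [this]
        exact abs_sub _ _
      have habs2 : |(s⁻¹ * (Nbar n ω - mb n))/s| = |s⁻¹ * (Nbar n ω - mb n)|/s := by
        rw [abs_div, abs_of_pos hspos]
      calc |(c n)⁻¹ * Nbar n ω - (s⁻¹ * (Nbar n ω - mb n))/s - ν|
          ≤ |(c n)⁻¹ * Nbar n ω - ν| + |(s⁻¹ * (Nbar n ω - mb n))/s| := habs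
        _ ≤ ν/4 + ν/4 := by rw [habs2]; exact add_le_add hω1 hvs
        _ = ν/2 := by ring
    have hpos : 0 < (c n)⁻¹ * mb n := by
      have := (abs_le.mp hclose).1
      linarith
    have : mb n = c n * ((c n)⁻¹ * mb n) := by
      rw [← mul_assoc, mul_inv_cancel₀ (hc_pos n).ne', one_mul]
    rw [this]
    exact mul_pos (hc_pos n) hpos
  rw [ENNReal.tendsto_atTop_zero]
  intro ε hε
  set ε' := min ε 1 with hε'def
  have hε'0 : 0 < ε' := lt_min hε (by norm_num)
  have hε'top : ε' ≠ ∞ := ne_top_of_le_ne_top (by norm_num) (min_le_right _ _)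
  set t := ε'.toReal with htdef
  have ht0 : 0 < t := ENNReal.toReal_pos hε'0.ne' hε'top
  set θ := ENNReal.ofReal (t/4) with hθdef
  have hθ0 : 0 < θ := ENNReal.ofReal_pos.mpr (by positivity)
  obtain ⟨MU, hMU0, hU⟩ := htightU θ hθ0
  obtain ⟨MV, hMV0, hV⟩ := htightV θ hθ0
  set M := max 1 (max MU MV) with hMdef
  have hM1 : (1:ℝ) ≤ M := le_max_left _ _
  have hM0 : (0:ℝ) < M := by linarith
  set κ := min (ν/2) (δ*ν^2/(8*M)) with hκdef
  have hκ0 : 0 < κ := lt_min (by positivity) (by positivity)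
  set τ := δ*ν/(4*M) with hτdef
  have hτ0 : 0 < τ := by positivity
  have hU' : ∀ᶠ n in atTop, P {ω | M ≤ |(Real.sqrt (c n))⁻¹ * (Nhat n ω - mh n)|} ≤ θ := by
    filter_upwards [hU] with n hn
    refine le_trans (measure_mono ?_) hn.le
    intro ω h
    exact le_trans (le_trans (le_max_left MU MV) (le_max_right 1 _)) h
  have hV' : ∀ᶠ n in atTop, P {ω | M ≤ |(Real.sqrt (c n))⁻¹ * (Nbar n ω - mb n)|} ≤ θ := by
    filter_upwards [hV] with n hn
    refine le_trans (measure_mono ?_) hn.le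
    intro ω h
    exact le_trans (le_trans (le_max_right MU MV) (le_max_right 1 _)) h
  have hW' : ∀ᶠ n in atTop, P {ω | κ < |(c n)⁻¹ * Nbar n ω - ν|} ≤ θ := by
    have h := (hW κ hκ0).eventually_lt_const (show (0:ℝ) < t/4 by positivity)
    filter_upwards [h] with n hn
    rw [← ENNReal.ofReal_toReal (measure_ne_top P _)]
    exact ENNReal.ofReal_le_ofReal hn.le
  have hA4 : ∀ᶠ n in atTop, |mh n / mb n - η| ≤ τ := by
    obtain ⟨N, hN⟩ := Metric.tendsto_atTop.mp hηn τ hτ0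
    refine eventually_atTop.mpr ⟨N, fun n hn => ?_⟩
    have := hN n hn
    rw [Real.dist_eq] at this
    exact this.le
  have hfinal : ∀ᶠ n in atTop, P {ω | δ <
      |Real.sqrt (c n) * (Nhat n ω / Nbar n ω - mh n / mb n) -
        (ν⁻¹ * ((Real.sqrt (c n))⁻¹ * (Nhat n ω - mh n)) +
          (-(η/ν)) * ((Real.sqrt (c n))⁻¹ * (Nbar n ω - mb n)))|} ≤ ε := by
    filter_upwards [hU', hV', hW', hA4, hA5] with n h1 h2 h3 h4 h5
    have hsub : {ω | δ <
        |Real.sqrt (c n) * (Nhat n ω / Nbar n ω - mh n / mb n) -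
          (ν⁻¹ * ((Real.sqrt (c n))⁻¹ * (Nhat n ω - mh n)) +
            (-(η/ν)) * ((Real.sqrt (c n))⁻¹ * (Nbar n ω - mb n)))|}
        ⊆ {ω | M ≤ |(Real.sqrt (c n))⁻¹ * (Nhat n ω - mh n)|} ∪
          ({ω | M ≤ |(Real.sqrt (c n))⁻¹ * (Nbar n ω - mb n)|} ∪
            {ω | κ < |(c n)⁻¹ * Nbar n ω - ν|}) := by
      intro ω hω
      simp only [Set.mem_setOf_eq] at hω
      by_contra hcon
      simp only [Set.mem_union, Set.mem_setOf_eq] at hcon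
      push_neg at hcon
      obtain ⟨hc1, hc2, hc3⟩ := hcon
      set s := Real.sqrt (c n) with hs
      have hss : s * s = c n := Real.mul_self_sqrt (hc_pos n).le
      have hspos : 0 < s := hsqrt n
      have hwb : |(c n)⁻¹ * Nbar n ω - ν| ≤ κ := hc3
      have hwlow : ν/2 ≤ (c n)⁻¹ * Nbar n ω := by
        have hb := (abs_le.mp hwb).1
        have hκν : κ ≤ ν/2 := min_le_left _ _
        linarith
      have hNbar : 0 < Nbar n ω := by
        have : Nbar n ω = c n * ((c n)⁻¹ * Nbar n ω) := by
          rw [← mul_assoc, mul_inv_cancel₀ (hc_pos n).ne', one_mul]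
        rw [this]
        exact mul_pos (hc_pos n) (by linarith)
      have hid : s * (Nhat n ω / Nbar n ω - mh n / mb n)
          = ((s⁻¹*(Nhat n ω - mh n)) - (mh n/mb n)*(s⁻¹*(Nbar n ω - mb n)))/((c n)⁻¹ * Nbar n ω) := by
        rw [← hss]
        field_simp
        ring
      rw [hid] at hω
      have habs := abs_bound (ν := ν) (η := η) hδ hν hη0.le hη1 hM1
        hc1.le hc2.le
        (hκdef ▸ hwb) (hτdef ▸ h4)
      exact absurd hω (not_lt.mpr habs)
    calc P {ω | δ <
        |Real.sqrt (c n) * (Nhat n ω / Nbar n ω - mh n / mb n) -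
          (ν⁻¹ * ((Real.sqrt (c n))⁻¹ * (Nhat n ω - mh n)) +
            (-(η/ν)) * ((Real.sqrt (c n))⁻¹ * (Nbar n ω - mb n)))|}
        ≤ P ({ω | M ≤ |(Real.sqrt (c n))⁻¹ * (Nhat n ω - mh n)|} ∪
          ({ω | M ≤ |(Real.sqrt (c n))⁻¹ * (Nbar n ω - mb n)|} ∪
            {ω | κ < |(c n)⁻¹ * Nbar n ω - ν|})) := measure_mono hsub
      _ ≤ P {ω | M ≤ |(Real.sqrt (c n))⁻¹ * (Nhat n ω - mh n)|} +
          P ({ω | M ≤ |(Real.sqrt (c n))⁻¹ * (Nbar n ω - mb n)|} ∪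
            {ω | κ < |(c n)⁻¹ * Nbar n ω - ν|}) := measure_union_le _ _
      _ ≤ P {ω | M ≤ |(Real.sqrt (c n))⁻¹ * (Nhat n ω - mh n)|} +
          (P {ω | M ≤ |(Real.sqrt (c n))⁻¹ * (Nbar n ω - mb n)|} +
            P {ω | κ < |(c n)⁻¹ * Nbar n ω - ν|}) :=
          add_le_add_right (measure_union_le _ _) _
      _ ≤ θ + (θ + θ) := add_le_add h1 (add_le_add h2 h3)
      _ ≤ ε := by
          rw [hθdef, ← ENNReal.ofReal_add (by positivity) (by positivity),
            ← ENNReal.ofReal_add (by positivity) (by positivity)]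
          calc ENNReal.ofReal (t/4 + (t/4 + t/4)) ≤ ENNReal.ofReal t :=
                ENNReal.ofReal_le_ofReal (by linarith)
            _ = ε' := by rw [htdef, ENNReal.ofReal_toReal hε'top]
            _ ≤ ε := min_le_left _ _
  rw [eventually_atTop] at hfinal
  exact hfinal

/-- Corollary 4.1 (asymptotic normality of the runs estimator `η̂_n = N̂_n/N̄_n`):
with `U_n = c_n^{-1/2}(N̂_n − E N̂_n)`, `V_n = c_n^{-1/2}(N̄_n − E N̄_n)` converging
jointly in distribution (Cramér–Wold encoding) to `N(0, [[ην, ν],[ν, ηνσ²]])`,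
`W_n = c_n^{-1} N̄_n → ν` in probability and `η_n = E N̂_n / E N̄_n → η`,
we get `√c_n(η̂_n − η_n) →d N(0, (η/ν)(η²σ² − 1))`. -/
theorem stmt_17 {Ω : Type*} [MeasurableSpace Ω] (P : Measure Ω) (hP : IsProbabilityMeasure P)
    (η ν σ2 : ℝ) (hη0 : 0 < η) (hη1 : η ≤ 1) (hν : 0 < ν) (hσ2 : 1 / η ^ 2 < σ2)
    (c : ℕ → ℝ) (hc_pos : ∀ n, 0 < c n) (hc : Tendsto c atTop atTop)
    (Nhat Nbar : ℕ → Ω → ℝ)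
    (hNhatmeas : ∀ n, Measurable (Nhat n)) (hNbarmeas : ∀ n, Measurable (Nbar n))
    (hNhatint : ∀ n, Integrable (Nhat n) P) (hNbarint : ∀ n, Integrable (Nbar n) P)
    (hjoint : ∀ a b : ℝ,
      Tendsto (fun n => MeasureTheory.ProbabilityMeasure.map (⟨P, hP⟩ : ProbabilityMeasure Ω)
          (f := fun ω => a * ((Real.sqrt (c n))⁻¹ * (Nhat n ω - ∫ ω', Nhat n ω' ∂P)) +
            b * ((Real.sqrt (c n))⁻¹ * (Nbar n ω - ∫ ω', Nbar n ω' ∂P)))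
          ((((((hNhatmeas n).sub measurable_const).const_mul _).const_mul a).add
            (((((hNbarmeas n).sub measurable_const).const_mul _).const_mul b))).aemeasurable))
        atTop
        (𝓝 (⟨gaussianReal 0
            ((a ^ 2 * (η * ν) + 2 * a * b * ν + b ^ 2 * (η * ν * σ2)).toNNReal),
          inferInstance⟩ : ProbabilityMeasure ℝ)))
    (hW : ∀ ε > (0 : ℝ),
      Tendsto (fun n => (P {ω | ε < |(c n)⁻¹ * Nbar n ω - ν|}).toReal) atTop (𝓝 0))
    (hηn : Tendsto (fun n => (∫ ω, Nhat n ω ∂P) / ∫ ω, Nbar n ω ∂P) atTop (𝓝 η)) :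
    Tendsto (fun n => MeasureTheory.ProbabilityMeasure.map (⟨P, hP⟩ : ProbabilityMeasure Ω)
        (f := fun ω => Real.sqrt (c n) *
          (Nhat n ω / Nbar n ω - (∫ ω', Nhat n ω' ∂P) / ∫ ω', Nbar n ω' ∂P))
        (((((hNhatmeas n).div (hNbarmeas n)).sub measurable_const).const_mul _).aemeasurable))
      atTop
      (𝓝 (⟨gaussianReal 0 ((η / ν * (η ^ 2 * σ2 - 1)).toNNReal),
        inferInstance⟩ : ProbabilityMeasure ℝ)) := by
  have hvar : ((ν⁻¹) ^ 2 * (η * ν) + 2 * ν⁻¹ * (-(η/ν)) * ν + (-(η/ν)) ^ 2 * (η * ν * σ2))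
      = η / ν * (η ^ 2 * σ2 - 1) := by
    field_simp
    ring
  have h1' := hjoint ν⁻¹ (-(η/ν))
  rw [hvar] at h1'
  refine slutsky_approx P hP
    (fun n ω => ν⁻¹ * ((Real.sqrt (c n))⁻¹ * (Nhat n ω - ∫ ω', Nhat n ω' ∂P)) +
      (-(η/ν)) * ((Real.sqrt (c n))⁻¹ * (Nbar n ω - ∫ ω', Nbar n ω' ∂P)))
    (fun n ω => Real.sqrt (c n) *
      (Nhat n ω / Nbar n ω - (∫ ω', Nhat n ω' ∂P) / ∫ ω', Nbar n ω' ∂P))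
    (fun n => ((((((hNhatmeas n).sub measurable_const).const_mul _).const_mul ν⁻¹).add
            (((((hNbarmeas n).sub measurable_const).const_mul _).const_mul (-(η/ν))))).aemeasurable))
    (fun n => (((((hNhatmeas n).div (hNbarmeas n)).sub measurable_const).const_mul _).aemeasurable))
    _ h1' ?_
  intro δ hδ
  refine diff_small P hP η ν hη0 hη1 hν c hc_pos hc Nhat Nbar
    (fun n => ∫ ω', Nhat n ω' ∂P) (fun n => ∫ ω', Nbar n ω' ∂P) ?_ ?_ hW hηn δ hδ
  · intro θ hθ
    obtain ⟨M, hM, hev⟩ := tight_of_tendsto P hP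
      (fun n ω => (1:ℝ) * ((Real.sqrt (c n))⁻¹ * (Nhat n ω - ∫ ω', Nhat n ω' ∂P)) +
        (0:ℝ) * ((Real.sqrt (c n))⁻¹ * (Nbar n ω - ∫ ω', Nbar n ω' ∂P)))
      (fun n => ((((((hNhatmeas n).sub measurable_const).const_mul _).const_mul 1).add
          (((((hNbarmeas n).sub measurable_const).const_mul _).const_mul 0))).aemeasurable))
      _ (hjoint 1 0) θ hθ
    refine ⟨M, hM, ?_⟩
    filter_upwards [hev] with n hn
    refine lt_of_le_of_lt (measure_mono ?_) hn
    intro ω h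
    simp only [Set.mem_setOf_eq] at h ⊢
    beta_reduce at h
    have he : (1:ℝ) * ((Real.sqrt (c n))⁻¹ * (Nhat n ω - ∫ ω', Nhat n ω' ∂P)) +
        (0:ℝ) * ((Real.sqrt (c n))⁻¹ * (Nbar n ω - ∫ ω', Nbar n ω' ∂P))
        = (Real.sqrt (c n))⁻¹ * (Nhat n ω - ∫ ω', Nhat n ω' ∂P) := by ring
    rw [he]
    exact h
  · intro θ hθ
    obtain ⟨M, hM, hev⟩ := tight_of_tendsto P hP
      (fun n ω => (0:ℝ) * ((Real.sqrt (c n))⁻¹ * (Nhat n ω - ∫ ω', Nhat n ω' ∂P)) +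
        (1:ℝ) * ((Real.sqrt (c n))⁻¹ * (Nbar n ω - ∫ ω', Nbar n ω' ∂P)))
      (fun n => ((((((hNhatmeas n).sub measurable_const).const_mul _).const_mul 0).add
          (((((hNbarmeas n).sub measurable_const).const_mul _).const_mul 1))).aemeasurable))
      _ (hjoint 0 1) θ hθ
    refine ⟨M, hM, ?_⟩
    filter_upwards [hev] with n hn
    refine lt_of_le_of_lt (measure_mono ?_) hn
    intro ω h
    simp only [Set.mem_setOf_eq] at h ⊢
    beta_reduce at h
    have he : (0:ℝ) * ((Real.sqrt (c n))⁻¹ * (Nhat n ω - ∫ ω', Nhat n ω' ∂P)) +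
        (1:ℝ) * ((Real.sqrt (c n))⁻¹ * (Nbar n ω - ∫ ω', Nbar n ω' ∂P))
        = (Real.sqrt (c n))⁻¹ * (Nbar n ω - ∫ ω', Nbar n ω' ∂P) := by ring
    rw [he]
    exact h
end
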